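/- arXiv:2211.09289 — 6 statements merged into one kernel-verified Lean document; each statement's English description precedes it below -/
import Mathlib

section
/- For every real number r > 1, the family (λ_σ^{-r})_{σ ∈ Γ} is summable and its sum satisfies ∑_{σ ∈ Γ} λ_σ^{-r} ≤ exp(∑_{k=1}^∞ k^{-r}) < ∞. -/
noncomputable def lam (σ : Finset ℕ) : ℝ := ∏ k ∈ σ, ((k : ℝ) + 1)

open Finset

/- Every `s ∈ T` is a subset of `U = ⋃ T`, and `∑_{s ⊆ U} ∏_{i ∈ s} f i = ∏_{i ∈ U} (1 + f i)`,
which `1 + x ≤ exp x` bounds by `exp (∑_{i ∈ U} f i)`. -/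
theorem sum_finsetProd_le_exp_tsum {ι : Type*} {f : ι → ℝ} (hf : ∀ i, 0 ≤ f i)
    (hfs : Summable f) (T : Finset (Finset ι)) :
    ∑ s ∈ T, ∏ i ∈ s, f i ≤ Real.exp (∑' i, f i) := by
  classical
  calc ∑ s ∈ T, ∏ i ∈ s, f i
      ≤ ∑ s ∈ (T.biUnion id).powerset, ∏ i ∈ s, f i :=
        sum_le_sum_of_subset_of_nonneg
          (fun s hs ↦ mem_powerset.mpr (subset_biUnion_of_mem id hs))
          (fun s _ _ ↦ prod_nonneg fun i _ ↦ hf i)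
    _ = ∏ i ∈ T.biUnion id, (1 + f i) := (prod_one_add _).symm
    _ ≤ Real.exp (∑ i ∈ T.biUnion id, f i) := Real.prod_one_add_le_exp_sum _ hf
    _ ≤ Real.exp (∑' i, f i) := Real.exp_le_exp.mpr (hfs.sum_le_tsum _ fun i _ ↦ hf i)

theorem tsum_finsetProd_le_exp_tsum {ι : Type*} {f : ι → ℝ} (hf : ∀ i, 0 ≤ f i)
    (hfs : Summable f) : ∑' s : Finset ι, ∏ i ∈ s, f i ≤ Real.exp (∑' i, f i) :=
  (summable_finsetProd_of_summable_nonneg hf hfs).tsum_le_of_sum_le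
    (sum_finsetProd_le_exp_tsum hf hfs)

theorem lam_rpow (σ : Finset ℕ) (s : ℝ) : lam σ ^ s = ∏ k ∈ σ, ((k : ℝ) + 1) ^ s :=
  (Real.finsetProd_rpow σ _ (fun k _ ↦ by positivity) s).symm

theorem summable_nat_add_one_rpow_neg {r : ℝ} (hr : 1 < r) :
    Summable (fun k : ℕ ↦ ((k : ℝ) + 1) ^ (-r)) := by
  have h := (summable_nat_add_iff 1).mpr (Real.summable_nat_rpow.mpr (neg_lt_neg hr))
  simpa only [Nat.cast_add, Nat.cast_one] using h

theorem stmt0 (r : ℝ) (hr : 1 < r) :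
    Summable (fun σ : Finset ℕ => lam σ ^ (-r)) ∧
    ∑' σ : Finset ℕ, lam σ ^ (-r) ≤ Real.exp (∑' k : ℕ, ((k : ℝ) + 1) ^ (-r)) := by
  have hf : ∀ k : ℕ, 0 ≤ ((k : ℝ) + 1) ^ (-r) := fun k ↦ by positivity
  simp only [lam_rpow]
  exact ⟨summable_finsetProd_of_summable_nonneg hf (summable_nat_add_one_rpow_neg hr),
    tsum_finsetProd_le_exp_tsum hf (summable_nat_add_one_rpow_neg hr)⟩
end

section
/- Let w be a 2D-weight and let F : Γ → ℂ satisfy |F(σ)| ≤ C·λ_σ^p for all σ ∈ Γ, where C ≥ 0 and p ≥ 0 are real constants. Then |θ_w(σ)·F(σ)| ≤ 2·α_w·C·λ_σ^{p+1} for all σ ∈ Γ. (This is the key estimate showing that multiplication of Fock transforms by θ_w maps generalized functionals to generalized functionals, i.e., that the 2D-GWN operator K_w is well defined on S*(M).) -/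
noncomputable def theta (w : ℕ → ℕ → ℝ) (σ : Finset ℕ) : ℝ :=
  (∑ j ∈ σ, w j j) + ∑ k ∈ σ, ∑' j : ℕ, (if j ∈ σ then 0 else w j k)

open Finset

lemma one_le_lam (σ : Finset ℕ) : 1 ≤ lam σ :=
  one_le_prod fun k _ => le_add_of_nonneg_left k.cast_nonneg

lemma card_le_lam (σ : Finset ℕ) : (#σ : ℝ) ≤ lam σ := by
  induction σ using Finset.induction_on_max with
  | empty => simp [lam]
  | insert a s hlt _ =>
    have hcard : #s ≤ a := by
      simpa using card_le_card fun x hx => mem_range.mpr (hlt x hx)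
    have ha : a ∉ s := fun h => (hlt a h).false
    calc (#(insert a s) : ℝ) = #s + 1 := by rw [card_insert_of_notMem ha, Nat.cast_succ]
      _ ≤ (a + 1) * 1 := by rw [mul_one]; exact_mod_cast Nat.succ_le_succ hcard
      _ ≤ (a + 1) * lam s := by gcongr; exact one_le_lam s
      _ = lam (insert a s) := by simp only [lam, prod_insert ha]

section Theta

variable {w : ℕ → ℕ → ℝ}

lemma theta_nonneg (hw0 : ∀ j k, 0 ≤ w j k) (σ : Finset ℕ) : 0 ≤ theta w σ :=
  add_nonneg (sum_nonneg fun j _ => hw0 j j)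
    (sum_nonneg fun k _ => tsum_nonneg fun j => by split_ifs <;> simp [hw0 j k])

lemma tsum_ite_mem_le_tsum {ι : Type*} [DecidableEq ι] {f : ι → ℝ} (hf0 : ∀ i, 0 ≤ f i)
    (hf : Summable f) (s : Finset ι) : ∑' i, (if i ∈ s then 0 else f i) ≤ ∑' i, f i := by
  have hle : ∀ i, (if i ∈ s then 0 else f i) ≤ f i := fun i => by
    split_ifs <;> simp [hf0 i]
  have hnonneg : ∀ i, 0 ≤ (if i ∈ s then 0 else f i) := fun i => by
    split_ifs <;> simp [hf0 i]
  exact (hf.of_nonneg_of_le hnonneg hle).tsum_le_tsum hle hf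

lemma theta_le_two_mul_card (hw0 : ∀ j k, 0 ≤ w j k)
    (hwsum : ∀ k, Summable fun j => w j k) {α : ℝ} (hcol : ∀ k, ∑' j, w j k ≤ α)
    (σ : Finset ℕ) : theta w σ ≤ 2 * α * #σ := by
  have hdiag : ∀ j, w j j ≤ α := fun j =>
    ((hwsum j).le_tsum j fun i _ => hw0 i j).trans (hcol j)
  have htail : ∀ k, ∑' j, (if j ∈ σ then 0 else w j k) ≤ α := fun k =>
    (tsum_ite_mem_le_tsum (fun j => hw0 j k) (hwsum k) σ).trans (hcol k)
  calc theta w σ ≤ #σ • α + #σ • α :=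
        add_le_add (sum_le_card_nsmul σ _ α fun j _ => hdiag j)
          (sum_le_card_nsmul σ _ α fun k _ => htail k)
    _ = 2 * α * #σ := by rw [nsmul_eq_mul]; ring

lemma theta_le_two_mul_lam (hw0 : ∀ j k, 0 ≤ w j k)
    (hwsum : ∀ k, Summable fun j => w j k) {α : ℝ} (hcol : ∀ k, ∑' j, w j k ≤ α)
    (σ : Finset ℕ) : theta w σ ≤ 2 * α * lam σ := by
  have hα : 0 ≤ α := (tsum_nonneg fun j => hw0 j 0).trans (hcol 0)
  exact (theta_le_two_mul_card hw0 hwsum hcol σ).trans (by gcongr; exact card_le_lam σ)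

end Theta

theorem stmt3_general (w : ℕ → ℕ → ℝ) (hw0 : ∀ j k, 0 ≤ w j k)
    (hwsum : ∀ k, Summable fun j => w j k)
    (hwbdd : BddAbove (Set.range fun k => ∑' j, w j k))
    (α : ℝ) (hα : α = ⨆ k, ∑' j, w j k)
    (F : Finset ℕ → ℂ) (C p : ℝ)
    (hF : ∀ σ : Finset ℕ, ‖F σ‖ ≤ C * lam σ ^ p) :
    ∀ σ : Finset ℕ, ‖((theta w σ : ℝ) : ℂ) * F σ‖ ≤ 2 * α * C * lam σ ^ (p + 1) := by
  intro σ
  have hcol : ∀ k, ∑' j, w j k ≤ α := fun k => hα ▸ le_ciSup hwbdd k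
  have hθ := theta_le_two_mul_lam hw0 hwsum hcol σ
  have hlam : lam σ ≠ 0 := (zero_lt_one.trans_le (one_le_lam σ)).ne'
  rw [norm_mul, Complex.norm_real, Real.norm_of_nonneg (theta_nonneg hw0 σ),
    Real.rpow_add_one hlam]
  calc theta w σ * ‖F σ‖ ≤ (2 * α * lam σ) * (C * lam σ ^ p) :=
        mul_le_mul hθ (hF σ) (norm_nonneg _) ((theta_nonneg hw0 σ).trans hθ)
    _ = 2 * α * C * (lam σ ^ p * lam σ) := by ring

theorem stmt3 (w : ℕ → ℕ → ℝ) (hw0 : ∀ j k, 0 ≤ w j k)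
    (hwsum : ∀ k, Summable fun j => w j k)
    (hwbdd : BddAbove (Set.range fun k => ∑' j, w j k))
    (α : ℝ) (hα : α = ⨆ k, ∑' j, w j k)
    (F : Finset ℕ → ℂ) (C p : ℝ) (hC : 0 ≤ C) (hp : 0 ≤ p)
    (hF : ∀ σ : Finset ℕ, ‖F σ‖ ≤ C * lam σ ^ p) :
    ∀ σ : Finset ℕ, ‖((theta w σ : ℝ) : ℂ) * F σ‖ ≤ 2 * α * C * lam σ ^ (p + 1) :=
  stmt3_general w hw0 hwsum hwbdd α hα F C p hF
end

section
/- Let w be a 2D-weight, F : Γ → ℂ and σ ∈ Γ. Then the square-array partial sums ∑_{j=0}^n ∑_{k=0}^n w(j,k)·(a_k† a_j a_j† a_k F)(σ) converge, as n → ∞, to θ_w(σ)·F(σ) = (K_w F)(σ); that is, in Fock-transform coordinates the 2D-GWN operator K_w is represented by the naturally convergent double series ∑_{j,k=0}^∞ w(j,k)·a_k† a_j a_j† a_k. -/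
noncomputable def ann (k : ℕ) (F : Finset ℕ → ℂ) : Finset ℕ → ℂ :=
  fun σ => (1 - if k ∈ σ then 1 else 0) * F (insert k σ)

noncomputable def cre (k : ℕ) (F : Finset ℕ → ℂ) : Finset ℕ → ℂ :=
  fun σ => (if k ∈ σ then 1 else 0) * F (σ.erase k)

lemma cre_ann_cre_ann_apply (j k : ℕ) (F : Finset ℕ → ℂ) (σ : Finset ℕ) :
    cre k (ann j (cre j (ann k F))) σ = if k ∈ σ ∧ (j = k ∨ j ∉ σ) then F σ else 0 := by
  by_cases hk : k ∈ σ
  · by_cases hj : j ∈ σ.erase k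
    · obtain ⟨hjk, hjσ⟩ := Finset.mem_erase.1 hj
      simp [cre, ann, hk, hj, hjk, hjσ]
    · have hj' : j = k ∨ j ∉ σ := by
        by_contra! h
        exact hj (Finset.mem_erase.2 h)
      simp [cre, ann, hk, hj, hj', Finset.erase_insert hj, Finset.insert_erase hk]
  · simp [cre, ann, hk]

lemma sum_range_sum_range_cre_ann_cre_ann (w : ℕ → ℕ → ℝ) (F : Finset ℕ → ℂ) {σ : Finset ℕ}
    {N : ℕ} (hσ : σ ⊆ Finset.range N) :
    ∑ j ∈ Finset.range N, ∑ k ∈ Finset.range N,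
        ((w j k : ℝ) : ℂ) * cre k (ann j (cre j (ann k F))) σ =
      (((∑ j ∈ σ, w j j) + ∑ k ∈ σ, ∑ j ∈ Finset.range N, if j ∈ σ then 0 else w j k : ℝ) : ℂ)
        * F σ := by
  have hdiag : ∀ k ∈ σ, ∀ j, (if j = k ∨ j ∉ σ then w j k else 0) =
      (if j = k then w j k else 0) + if j ∈ σ then 0 else w j k := by
    intro k hk j
    by_cases hjk : j = k
    · subst hjk; simp [hk]
    · by_cases hj : j ∈ σ <;> simp [hjk, hj]
  have hreal : ∑ k ∈ Finset.range N, ∑ j ∈ Finset.range N,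
      (if k ∈ σ ∧ (j = k ∨ j ∉ σ) then w j k else 0) =
      (∑ j ∈ σ, w j j) + ∑ k ∈ σ, ∑ j ∈ Finset.range N, if j ∈ σ then 0 else w j k := by
    rw [← Finset.sum_subset hσ fun k _ hk => by simp [hk], ← Finset.sum_add_distrib]
    refine Finset.sum_congr rfl fun k hk => ?_
    simp only [hk, true_and]
    rw [Finset.sum_congr rfl fun j _ => hdiag k hk j, Finset.sum_add_distrib,
      Finset.sum_ite_eq' _ _ (fun j => w j k), if_pos (hσ hk)]
  rw [Finset.sum_comm, ← hreal]
  push_cast [Finset.sum_mul]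
  refine Finset.sum_congr rfl fun k _ => Finset.sum_congr rfl fun j _ => ?_
  rw [cre_ann_cre_ann_apply]
  split_ifs <;> simp

lemma tendsto_truncated_theta (w : ℕ → ℕ → ℝ) (hwsum : ∀ k, Summable fun j => w j k)
    (σ : Finset ℕ) :
    Filter.Tendsto
      (fun N => (∑ j ∈ σ, w j j) + ∑ k ∈ σ, ∑ j ∈ Finset.range N, if j ∈ σ then 0 else w j k)
      Filter.atTop (nhds (theta w σ)) := by
  refine tendsto_const_nhds.add (tendsto_finsetSum _ fun k _ => ?_)
  have hsum : Summable fun j => if j ∈ σ then 0 else w j k := by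
    have hind : (fun j => if j ∈ σ then 0 else w j k) = {j | j ∉ σ}.indicator (w · k) := by
      ext j
      by_cases hj : j ∈ σ <;> simp [hj]
    exact hind ▸ (hwsum k).indicator _
  exact hsum.hasSum.tendsto_sum_nat

theorem stmt7_general (w : ℕ → ℕ → ℝ)
    (hwsum : ∀ k, Summable fun j => w j k)
    (F : Finset ℕ → ℂ) (σ : Finset ℕ) :
    Filter.Tendsto
      (fun n : ℕ => ∑ j ∈ Finset.range (n+1), ∑ k ∈ Finset.range (n+1),
        ((w j k : ℝ) : ℂ) * cre k (ann j (cre j (ann k F))) σ)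
      Filter.atTop (nhds (((theta w σ : ℝ) : ℂ) * F σ)) := by
  have hlim := (((Complex.continuous_ofReal.tendsto _).comp
    (tendsto_truncated_theta w hwsum σ)).mul_const (F σ)).comp
    (Filter.tendsto_add_atTop_nat 1)
  refine hlim.congr' ?_
  filter_upwards [Filter.eventually_ge_atTop (σ.sup id)] with n hn
  have hσ : σ ⊆ Finset.range (n + 1) :=
    (Finset.subset_range_sup_succ σ).trans (Finset.range_subset_range.2 (Nat.succ_le_succ hn))
  exact (sum_range_sum_range_cre_ann_cre_ann w F hσ).symm

theorem stmt7 (w : ℕ → ℕ → ℝ) (hw0 : ∀ j k, 0 ≤ w j k)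
    (hwsum : ∀ k, Summable fun j => w j k)
    (hwbdd : BddAbove (Set.range fun k => ∑' j, w j k))
    (F : Finset ℕ → ℂ) (σ : Finset ℕ) :
    Filter.Tendsto
      (fun n : ℕ => ∑ j ∈ Finset.range (n+1), ∑ k ∈ Finset.range (n+1),
        ((w j k : ℝ) : ℂ) * cre k (ann j (cre j (ann k F))) σ)
      Filter.atTop (nhds (((theta w σ : ℝ) : ℂ) * F σ)) :=
  stmt7_general w hwsum F σ
end

section
/- Let w be a 2D-weight, k ∈ ℕ and σ ∈ Γ with k ∈ σ. Then θ_w(σ \ {k}) = θ_w(σ) + ∑_{n ∈ σ} w(k,n) + ∑_{j ∈ σ} w(j,k) − 2·w(k,k) − ∑_{j=0}^∞ w(j,k). (Equivalently, 1_σ(k)·θ_w(σ \ {k}) = 1_σ(k)·[θ_w(σ) + #_{w(k,·)}(σ) + #_{w(·,k)}(σ) − 2·w(k,k) − ∑_{j=0}^∞ w(j,k)] for all σ ∈ Γ, where #_{w(k,·)}(σ) = ∑_{n ∈ σ} w(k,n) and #_{w(·,k)}(σ) = ∑_{j ∈ σ} w(j,k).) -/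
theorem tsum_ite_mem_zero_eq_sub {α G : Type*} [DecidableEq α] [AddCommGroup G]
    [TopologicalSpace G] [IsTopologicalAddGroup G] [T2Space G] {f : α → G} (hf : Summable f) (s : Finset α) :
    ∑' j, (if j ∈ s then 0 else f j) = ∑' j, f j - ∑ j ∈ s, f j := by
  have hs : Summable fun j => if j ∈ s then f j else 0 :=
    summable_of_ne_finset_zero fun j hj => if_neg hj
  have hsplit : ∀ j, (if j ∈ s then 0 else f j) = f j - if j ∈ s then f j else 0 := by
    intro j; split_ifs <;> simp
  rw [tsum_congr hsplit, hf.tsum_sub hs, tsum_eq_sum fun j hj => if_neg hj,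
    Finset.sum_congr rfl fun j hj => if_pos hj]

theorem theta_eq_of_summable {w : ℕ → ℕ → ℝ} (hw : ∀ k, Summable fun j => w j k)
    (σ : Finset ℕ) :
    theta w σ = ∑ j ∈ σ, w j j + ∑ k ∈ σ, (∑' j, w j k - ∑ j ∈ σ, w j k) := by
  simp only [theta, tsum_ite_mem_zero_eq_sub (hw _)]

theorem stmt15_general (w : ℕ → ℕ → ℝ)
    (hwsum : ∀ k, Summable fun j => w j k)
    (k : ℕ) (σ : Finset ℕ) (hk : k ∈ σ) :
    theta w (σ.erase k)
      = theta w σ + (∑ n ∈ σ, w k n) + (∑ j ∈ σ, w j k)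
        - 2 * w k k - ∑' j, w j k := by
  have hcol : ∀ m, ∑ j ∈ σ.erase k, w j m = ∑ j ∈ σ, w j m - w k m :=
    fun m => Finset.sum_erase_eq_sub hk
  -- every column `m ∈ σ \ {k}` gains the entry `w k m`; column `k` itself leaves `σ`
  have hcols : ∑ m ∈ σ.erase k, (∑' j, w j m - ∑ j ∈ σ.erase k, w j m)
      = ∑ m ∈ σ, (∑' j, w j m - ∑ j ∈ σ, w j m) + ∑ n ∈ σ, w k n
        - (∑' j, w j k - ∑ j ∈ σ, w j k) - w k k := by
    have hterm : ∀ m, ∑' j, w j m - ∑ j ∈ σ.erase k, w j m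
        = (∑' j, w j m - ∑ j ∈ σ, w j m) + w k m := fun m => by rw [hcol]; ring
    rw [Finset.sum_congr rfl fun m _ => hterm m, Finset.sum_erase_eq_sub hk,
      Finset.sum_add_distrib]
    ring
  rw [theta_eq_of_summable hwsum, theta_eq_of_summable hwsum, hcols,
    Finset.sum_erase_eq_sub hk]
  ring

theorem stmt15 (w : ℕ → ℕ → ℝ) (hw0 : ∀ j k, 0 ≤ w j k)
    (hwsum : ∀ k, Summable fun j => w j k)
    (hwbdd : BddAbove (Set.range fun k => ∑' j, w j k))
    (k : ℕ) (σ : Finset ℕ) (hk : k ∈ σ) :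
    theta w (σ.erase k)
      = theta w σ + (∑ n ∈ σ, w k n) + (∑ j ∈ σ, w j k)
        - 2 * w k k - ∑' j, w j k :=
  stmt15_general w hwsum k σ hk
end

section
/- Let w be a 2D-weight and k ∈ ℕ. Then in Fock-transform coordinates the commutation relation K_w ∘ a_k† = a_k† ∘ K_w − a_k† ∘ N_{w(k,·)} − a_k† ∘ N_{w(·,k)} + (∑_{j=0}^∞ w(j,k))·a_k† holds: for every F : Γ → ℂ and every σ ∈ Γ, (K_w(a_k† F))(σ) = (a_k†(K_w F))(σ) − (a_k†(N_{w(k,·)} F))(σ) − (a_k†(N_{w(·,k)} F))(σ) + (∑_{j=0}^∞ w(j,k))·(a_k† F)(σ). -/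
noncomputable def Nop (u : ℕ → ℝ) (F : Finset ℕ → ℂ) : Finset ℕ → ℂ :=
  fun σ => ((∑ m ∈ σ, u m : ℝ) : ℂ) * F σ

noncomputable def Kop (w : ℕ → ℕ → ℝ) (F : Finset ℕ → ℂ) : Finset ℕ → ℂ :=
  fun σ => ((theta w σ : ℝ) : ℂ) * F σ

/-!
Both sides vanish unless `k ∈ σ`. In that case the identity is the formula for the change of
`θ_w` when `k` is inserted into `τ = σ \ {k}`: the column of `k` contributes `w(k,k)` plus its
entries outside `τ ∪ {k}`, i.e. `∑ⱼ w(j,k) - w(k,k) - ∑_{m ∈ τ} w(m,k)`, and every column `m ∈ τ`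
loses its entry `w(k,m)`.
-/

theorem tsum_ite_mem_zero_eq_tsum_sub_sum {β α : Type*} [DecidableEq β] [AddCommGroup α]
    [TopologicalSpace α] [IsTopologicalAddGroup α] [T2Space α] {f : β → α} (hf : Summable f)
    (s : Finset β) :
    ∑' j, (if j ∈ s then 0 else f j) = ∑' j, f j - ∑ j ∈ s, f j := by
  have hfin : ∀ j ∉ s, (if j ∈ s then f j else 0) = 0 := fun j hj => if_neg hj
  calc ∑' j, (if j ∈ s then 0 else f j)
      = ∑' j, (f j - if j ∈ s then f j else 0) := tsum_congr fun j => by split_ifs <;> simp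
    _ = ∑' j, f j - ∑ j ∈ s, f j := by
      rw [hf.tsum_sub (summable_of_ne_finset_zero hfin), tsum_eq_sum hfin]
      simp

theorem theta_eq_sum_sub (w : ℕ → ℕ → ℝ) (hwsum : ∀ k, Summable fun j => w j k)
    (σ : Finset ℕ) :
    theta w σ = ∑ j ∈ σ, w j j + ∑ k ∈ σ, (∑' j, w j k - ∑ j ∈ σ, w j k) := by
  simp only [theta, tsum_ite_mem_zero_eq_tsum_sub_sum (hwsum _)]

theorem theta_insert (w : ℕ → ℕ → ℝ) (hwsum : ∀ k, Summable fun j => w j k) {k : ℕ}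
    {τ : Finset ℕ} (hk : k ∉ τ) :
    theta w (insert k τ)
      = theta w τ - ∑ m ∈ τ, w k m - ∑ m ∈ τ, w m k + ∑' j, w j k := by
  simp only [theta_eq_sum_sub w hwsum, Finset.sum_insert hk, Finset.sum_sub_distrib,
    Finset.sum_add_distrib]
  ring

theorem stmt17_general (w : ℕ → ℕ → ℝ)
    (hwsum : ∀ k, Summable fun j => w j k)
    (k : ℕ) (F : Finset ℕ → ℂ) (σ : Finset ℕ) :
    Kop w (cre k F) σ
      = cre k (Kop w F) σ - cre k (Nop (fun n => w k n) F) σ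
        - cre k (Nop (fun j => w j k) F) σ
        + ((∑' j, w j k : ℝ) : ℂ) * cre k F σ := by
  by_cases hk : k ∈ σ
  · have hθ := theta_insert w hwsum (Finset.notMem_erase k σ)
    rw [Finset.insert_erase hk] at hθ
    simp only [Kop, cre, Nop, hk, if_true, hθ]
    push_cast
    ring
  · simp [Kop, cre, hk]

theorem stmt17 (w : ℕ → ℕ → ℝ) (hw0 : ∀ j k, 0 ≤ w j k)
    (hwsum : ∀ k, Summable fun j => w j k)
    (hwbdd : BddAbove (Set.range fun k => ∑' j, w j k))
    (k : ℕ) (F : Finset ℕ → ℂ) (σ : Finset ℕ) :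
    Kop w (cre k F) σ
      = cre k (Kop w F) σ - cre k (Nop (fun n => w k n) F) σ
        - cre k (Nop (fun j => w j k) F) σ
        + ((∑' j, w j k : ℝ) : ℂ) * cre k F σ :=
  stmt17_general w hwsum k F σ
end

section
/- In Fock-transform coordinates, the generalized annihilation and creation operators satisfy the canonical anti-commutation relation in equal time and the following commutation relations: for every F : Γ → ℂ, (i) a_k† a_k F + a_k a_k† F = F for all k ∈ ℕ; (ii) a_j a_k F = a_k a_j F, a_j† a_k† F = a_k† a_j† F, and a_j† a_k F = a_k a_j† F whenever j ≠ k; (iii) a_j a_j F = 0 and a_j† a_j† F = 0 for all j ∈ ℕ. -/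
/-! Each relation is checked pointwise at `σ`, splitting on whether the indices involved lie in
`σ`: in every case both sides either vanish or evaluate `F` at the same finite set. -/

section FockOperators

variable {j k : ℕ} {F : Finset ℕ → ℂ} {σ : Finset ℕ}

theorem ann_apply_of_mem (h : k ∈ σ) : ann k F σ = 0 := by
  simp [ann, h]

theorem ann_apply_of_notMem (h : k ∉ σ) : ann k F σ = F (insert k σ) := by
  simp [ann, h]

theorem cre_apply_of_mem (h : k ∈ σ) : cre k F σ = F (σ.erase k) := by
  simp [cre, h]

theorem cre_apply_of_notMem (h : k ∉ σ) : cre k F σ = 0 := by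
  simp [cre, h]

theorem cre_ann_add_ann_cre (k : ℕ) (F : Finset ℕ → ℂ) (σ : Finset ℕ) :
    cre k (ann k F) σ + ann k (cre k F) σ = F σ := by
  by_cases h : k ∈ σ
  · rw [cre_apply_of_mem h, ann_apply_of_notMem (Finset.notMem_erase k σ),
      ann_apply_of_mem h, Finset.insert_erase h, add_zero]
  · rw [cre_apply_of_notMem h, ann_apply_of_notMem h,
      cre_apply_of_mem (Finset.mem_insert_self k σ), Finset.erase_insert h, zero_add]

theorem ann_comm (j k : ℕ) (F : Finset ℕ → ℂ) : ann j (ann k F) = ann k (ann j F) := by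
  obtain rfl | hjk := eq_or_ne j k
  · rfl
  funext σ
  by_cases hj : j ∈ σ <;> by_cases hk : k ∈ σ <;>
    simp [ann, hj, hk, hjk, hjk.symm, Finset.insert_comm]

theorem cre_comm (j k : ℕ) (F : Finset ℕ → ℂ) : cre j (cre k F) = cre k (cre j F) := by
  obtain rfl | hjk := eq_or_ne j k
  · rfl
  funext σ
  by_cases hj : j ∈ σ <;> by_cases hk : k ∈ σ <;>
    simp [cre, hj, hk, hjk, hjk.symm, Finset.erase_right_comm]

theorem cre_ann_comm (hjk : j ≠ k) (F : Finset ℕ → ℂ) :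
    cre j (ann k F) = ann k (cre j F) := by
  funext σ
  by_cases hj : j ∈ σ <;> by_cases hk : k ∈ σ <;>
    simp [ann, cre, hj, hk, hjk, hjk.symm, Finset.erase_insert_of_ne hjk.symm]

theorem ann_ann_self (k : ℕ) (F : Finset ℕ → ℂ) : ann k (ann k F) = 0 := by
  funext σ
  by_cases h : k ∈ σ
  · exact ann_apply_of_mem h
  · rw [ann_apply_of_notMem h, ann_apply_of_mem (Finset.mem_insert_self k σ), Pi.zero_apply]

theorem cre_cre_self (k : ℕ) (F : Finset ℕ → ℂ) : cre k (cre k F) = 0 := by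
  funext σ
  by_cases h : k ∈ σ
  · rw [cre_apply_of_mem h, cre_apply_of_notMem (Finset.notMem_erase k σ), Pi.zero_apply]
  · exact cre_apply_of_notMem h

end FockOperators

theorem stmt19 :
    ∀ F : Finset ℕ → ℂ,
      (∀ k : ℕ, ∀ σ : Finset ℕ, cre k (ann k F) σ + ann k (cre k F) σ = F σ) ∧
      (∀ j k : ℕ, j ≠ k →
        ann j (ann k F) = ann k (ann j F) ∧
        cre j (cre k F) = cre k (cre j F) ∧
        cre j (ann k F) = ann k (cre j F)) ∧
      (∀ j : ℕ, ann j (ann j F) = 0 ∧ cre j (cre j F) = 0) :=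
  fun F =>
    ⟨fun k σ => cre_ann_add_ann_cre k F σ,
      fun j k hjk => ⟨ann_comm j k F, cre_comm j k F, cre_ann_comm hjk F⟩,
      fun j => ⟨ann_ann_self j F, cre_cre_self j F⟩⟩
end
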